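/- arXiv:1601.07722 — 5 statements merged into one kernel-verified Lean document; each statement's English description precedes it below -/
import Mathlib

section
/- Let 1 ≤ p < ∞ and T > 0, let f ∈ L^p(ℝ; ℂ), and let F : (0,T) × ℝ → ℂ be measurable with ∫₀ᵀ ‖F(s,·)‖_{L^p(ℝ)} ds < ∞. Then the function (t,x) ↦ f(x−t) · ∫₀ᵗ F(s, x+t−s) ds satisfies (∫₀ᵀ ∫_ℝ |f(x−t) ∫₀ᵗ F(s, x+t−s) ds|^p dx dt)^{1/p} ≤ (1/2)^{1/p} ‖f‖_{L^p(ℝ)} ∫₀ᵀ ‖F(s,·)‖_{L^p(ℝ)} ds. -/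
/-!
Bound the Duhamel integral pointwise by `∫ |f(x - t)| |F(s, x + t - s)| 1_{s ≤ t} ds`.
Minkowski's integral inequality then reduces the estimate to a single time `s`, where the
characteristic coordinates `u = x - t`, `v = x + t - s` (Jacobian `2`) split the `L^p` norm of
`f(x - t) F(s, x + t - s)` into `2^{-1/p} ‖f‖_p ‖F(s)‖_p`.

Minkowski's inequality itself follows from Hölder's inequality tested against `Φ^{p-1}`,
`Φ y = ∫ K x y dx`, after truncating `Φ` so that `∫ Φ^p` is finite and may be cancelled.
-/

open MeasureTheory Set
open scoped ENNReal

theorem ENNReal.le_rpow_of_le_rpow_one_div_mul {p q : ℝ} (hpq : p.HolderConjugate q)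
    {a b : ℝ≥0∞} (ha : a ≠ ∞) (h : a ≤ a ^ (1 / q) * b) : a ≤ b ^ p := by
  rcases eq_or_ne a 0 with rfl | ha₀
  · exact zero_le
  have hsplit : a = a ^ (1 / q) * a ^ (1 / p) := by
    rw [← ENNReal.rpow_add _ _ ha₀ ha, one_div, one_div, add_comm, hpq.inv_add_inv_eq_one,
      ENNReal.rpow_one]
  have hcancel : a ^ (1 / p) ≤ b :=
    (ENNReal.mul_le_mul_iff_right (ENNReal.rpow_pos (pos_iff_ne_zero.2 ha₀) ha).ne'
      (ENNReal.rpow_ne_top_of_nonneg (by positivity [hpq.symm.pos]) ha)).1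
      (hsplit.symm.trans_le h)
  rwa [one_div, ENNReal.rpow_inv_le_iff hpq.pos] at hcancel

theorem ENNReal.iSup_min_natCast_rpow {p : ℝ} (hp : 0 < p) (a : ℝ≥0∞) :
    ⨆ n : ℕ, min a n ^ p = a ^ p := by
  have hsup : ⨆ n : ℕ, min a n = a := by
    rw [← inf_iSup_eq, ENNReal.iSup_natCast, inf_top_eq]
  conv_rhs => rw [← hsup]
  exact ((ENNReal.orderIsoRpow p hp).map_iSup _).symm

section Minkowski

variable {α β : Type*} [MeasurableSpace α] [MeasurableSpace β] {μ : Measure α} {ν : Measure β}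
  {K : α → β → ℝ≥0∞}

theorem lintegral_mul_lintegral_le_of_holderConjugate [SFinite μ] [SFinite ν] {p q : ℝ}
    (hpq : p.HolderConjugate q) (hK : Measurable (Function.uncurry K)) {g : β → ℝ≥0∞}
    (hg : Measurable g) :
    ∫⁻ y, g y * ∫⁻ x, K x y ∂μ ∂ν
      ≤ (∫⁻ y, g y ^ q ∂ν) ^ (1 / q) * ∫⁻ x, (∫⁻ y, K x y ^ p ∂ν) ^ (1 / p) ∂μ := by
  calc ∫⁻ y, g y * ∫⁻ x, K x y ∂μ ∂ν
      = ∫⁻ x, ∫⁻ y, g y * K x y ∂ν ∂μ := by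
        rw [lintegral_lintegral_swap ((hg.comp measurable_snd).mul hK).aemeasurable]
        exact lintegral_congr fun y => (lintegral_const_mul _ hK.of_uncurry_right).symm
    _ ≤ ∫⁻ x, (∫⁻ y, g y ^ q ∂ν) ^ (1 / q) * (∫⁻ y, K x y ^ p ∂ν) ^ (1 / p) ∂μ :=
        lintegral_mono fun x =>
          ENNReal.lintegral_mul_le_Lp_mul_Lq ν hpq.symm hg.aemeasurable
            hK.of_uncurry_left.aemeasurable
    _ = _ := lintegral_const_mul _ ((hK.pow_const p).lintegral_prod_right'.pow_const _)

theorem lintegral_rpow_le_of_le_lintegral [SFinite μ] [SFinite ν] {p : ℝ} (hp : 1 < p)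
    (hK : Measurable (Function.uncurry K)) {φ : β → ℝ≥0∞} (hφ : Measurable φ)
    (hφK : ∀ y, φ y ≤ ∫⁻ x, K x y ∂μ) (hφ_fin : ∫⁻ y, φ y ^ p ∂ν ≠ ∞) :
    ∫⁻ y, φ y ^ p ∂ν ≤ (∫⁻ x, (∫⁻ y, K x y ^ p ∂ν) ^ (1 / p) ∂μ) ^ p := by
  have hpq := Real.HolderConjugate.conjExponent hp
  refine ENNReal.le_rpow_of_le_rpow_one_div_mul hpq hφ_fin ?_
  -- Hölder against `φ ^ (p - 1)`, whose `q`-th power is again `φ ^ p`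
  have hsplit : ∀ y, φ y ^ p = φ y ^ (p - 1) * φ y := fun y => by
    conv_lhs => rw [← sub_add_cancel p 1,
      ENNReal.rpow_add_of_nonneg _ _ (by linarith) zero_le_one, ENNReal.rpow_one]
  calc ∫⁻ y, φ y ^ p ∂ν
      ≤ ∫⁻ y, φ y ^ (p - 1) * ∫⁻ x, K x y ∂μ ∂ν := lintegral_mono fun y => by
        rw [hsplit]; gcongr; exact hφK y
    _ ≤ _ := lintegral_mul_lintegral_le_of_holderConjugate hpq hK (hφ.pow_const _)
    _ = _ := by simp_rw [← ENNReal.rpow_mul, hpq.sub_one_mul_conj]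

/-- Minkowski's integral inequality. -/
theorem lintegral_lintegral_rpow_le [SFinite μ] [SigmaFinite ν]
    (hK : Measurable (Function.uncurry K)) {p : ℝ} (hp : 1 ≤ p) :
    (∫⁻ y, (∫⁻ x, K x y ∂μ) ^ p ∂ν) ^ (1 / p) ≤ ∫⁻ x, (∫⁻ y, K x y ^ p ∂ν) ^ (1 / p) ∂μ := by
  rcases hp.eq_or_lt with rfl | hp
  · simpa using (lintegral_lintegral_swap hK.aemeasurable).ge
  have hp₀ : 0 < p := zero_lt_one.trans hp
  set R := ∫⁻ x, (∫⁻ y, K x y ^ p ∂ν) ^ (1 / p) ∂μ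
  have hΦ : Measurable fun y => ∫⁻ x, K x y ∂μ := hK.lintegral_prod_left'
  rw [one_div, ENNReal.rpow_inv_le_iff hp₀]
  refine lintegral_le_of_forall_fin_meas_le _ fun s hs hνs => ?_
  have : Fact (ν s < ∞) := ⟨hνs.lt_top⟩
  -- below height `n` on a set of finite measure, the left side is finite and can be cancelled
  rw [← lintegral_congr fun y => ENNReal.iSup_min_natCast_rpow hp₀ _,
    lintegral_iSup (fun n => (hΦ.min measurable_const).pow_const p)
      fun m n hmn y => ENNReal.rpow_le_rpow (min_le_min_left _ (Nat.mono_cast hmn)) hp₀.le]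
  refine iSup_le fun n => ?_
  have hfin : ∫⁻ y in s, min (∫⁻ x, K x y ∂μ) n ^ p ∂ν ≠ ∞ := by
    refine ne_top_of_le_ne_top (lintegral_const_lt_top (μ := ν.restrict s) ?_).ne
      (lintegral_mono fun y => ENNReal.rpow_le_rpow (min_le_right _ _) hp₀.le)
    exact ENNReal.rpow_ne_top_of_nonneg hp₀.le (ENNReal.natCast_ne_top n)
  calc _ ≤ (∫⁻ x, (∫⁻ y in s, K x y ^ p ∂ν) ^ (1 / p) ∂μ) ^ p :=
        lintegral_rpow_le_of_le_lintegral hp hK (hΦ.min measurable_const)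
          (fun y => min_le_left _ _) hfin
    _ ≤ R ^ p := by
        gcongr ?_ ^ p
        exact lintegral_mono fun x => by gcongr; exact Measure.restrict_le_self

end Minkowski

theorem Real.lintegral_comp_mul_left {g : ℝ → ℝ≥0∞} (hg : Measurable g) {a : ℝ} (ha : a ≠ 0) :
    ∫⁻ x, g (a * x) = ENNReal.ofReal |a⁻¹| * ∫⁻ x, g x := by
  rw [← lintegral_map hg (measurable_const_mul a), Real.map_volume_mul_left ha,
    lintegral_smul_measure, smul_eq_mul]

/-- In the characteristic coordinates `u = x - t`, `v = x + t`, `dt dx = du dv / 2`. -/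
theorem lintegral_lintegral_comp_sub_mul_comp_add {g h : ℝ → ℝ≥0∞} (hg : Measurable g)
    (hh : Measurable h) :
    ∫⁻ t, ∫⁻ x, g (x - t) * h (x + t) = 2⁻¹ * ((∫⁻ u, g u) * ∫⁻ v, h v) := by
  have hscale : ∀ u, ∫⁻ t, h (u + 2 * t) = 2⁻¹ * ∫⁻ v, h v := fun u => by
    rw [Real.lintegral_comp_mul_left (g := fun w => h (u + w)) (hh.comp (measurable_const_add u))
      two_ne_zero, lintegral_add_left_eq_self, abs_of_pos (by norm_num),
      ENNReal.ofReal_inv_of_pos two_pos, ENNReal.ofReal_ofNat]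
  calc ∫⁻ t, ∫⁻ x, g (x - t) * h (x + t)
      = ∫⁻ t, ∫⁻ u, g u * h (u + 2 * t) := lintegral_congr fun t => by
        rw [← lintegral_add_right_eq_self _ t]
        simp_rw [add_sub_cancel_right, add_assoc, ← two_mul]
    _ = ∫⁻ u, g u * ∫⁻ t, h (u + 2 * t) := by
        rw [lintegral_lintegral_swap (by fun_prop)]
        exact lintegral_congr fun u => lintegral_const_mul _ (by fun_prop)
    _ = 2⁻¹ * ((∫⁻ u, g u) * ∫⁻ v, h v) := by
        simp_rw [hscale]
        rw [lintegral_mul_const _ hg]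
        ring

theorem quasiMeasurePreserving_snd_sub_fst {G : Type*} [MeasurableSpace G] [AddGroup G]
    [MeasurableAdd₂ G] [MeasurableNeg G] (μ ν : Measure G) [SFinite μ] [SFinite ν]
    [ν.IsAddRightInvariant] :
    Measure.QuasiMeasurePreserving (fun q : G × G => q.2 - q.1) (μ.prod ν) ν :=
  (quasiMeasurePreserving_sub_of_right_invariant ν μ).comp
    Measure.measurePreserving_swap.quasiMeasurePreserving

noncomputable def duhamelKernel (f : ℝ → ℂ) (F : ℝ → ℝ → ℂ) (s : ℝ) (q : ℝ × ℝ) : ℝ≥0∞ :=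
  (Iic q.1).indicator (fun s => ‖f (q.2 - q.1) * F s (q.2 + q.1 - s)‖ₑ) s

section duhamelKernel

variable {f : ℝ → ℂ} {F : ℝ → ℝ → ℂ}

theorem measurable_duhamelKernel (hf : Measurable f) (hF : Measurable (Function.uncurry F)) :
    Measurable (Function.uncurry (duhamelKernel f F)) := by
  change Measurable ({z : ℝ × ℝ × ℝ | z.1 ≤ z.2.1}.indicator
    fun z => ‖f (z.2.2 - z.2.1) * F z.1 (z.2.2 + z.2.1 - z.1)‖ₑ)
  refine Measurable.indicator ?_ (measurableSet_le measurable_fst (by fun_prop))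
  exact ((hf.comp (by fun_prop)).mul (hF.comp (measurable_fst.prodMk (by fun_prop)))).enorm

theorem enorm_mul_intervalIntegral_le_lintegral_duhamelKernel {T : ℝ} {q : ℝ × ℝ}
    (hq : q.1 ∈ Ioo 0 T) :
    ‖f (q.2 - q.1) * ∫ s in (0 : ℝ)..q.1, F s (q.2 + q.1 - s)‖ₑ
      ≤ ∫⁻ s in Ioo 0 T, duhamelKernel f F s q := by
  have hIoc : Iic q.1 ∩ Ioo 0 T = Ioc 0 q.1 := by
    ext s
    simp only [mem_inter_iff, mem_Iic, mem_Ioo, mem_Ioc]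
    constructor
    · rintro ⟨hst, hs, -⟩; exact ⟨hs, hst⟩
    · rintro ⟨hs, hst⟩; exact ⟨hst, hs, hst.trans_lt hq.2⟩
  rw [← intervalIntegral.integral_const_mul, intervalIntegral.integral_of_le hq.1.le]
  refine (enorm_integral_le_lintegral_enorm _).trans_eq ?_
  unfold duhamelKernel
  rw [lintegral_indicator measurableSet_Iic, Measure.restrict_restrict measurableSet_Iic, hIoc]

theorem lintegral_duhamelKernel_rpow_le (hf : Measurable f) (hF : Measurable (Function.uncurry F))
    (I : Set ℝ) (s : ℝ) {r : ℝ} (hr : 0 ≤ r) :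
    ∫⁻ q, duhamelKernel f F s q ^ r ∂(volume.restrict I).prod volume
      ≤ 2⁻¹ * ((∫⁻ u, ‖f u‖ₑ ^ r) * ∫⁻ v, ‖F s v‖ₑ ^ r) := by
  have hFs : Measurable (F s) := hF.of_uncurry_left
  calc ∫⁻ q, duhamelKernel f F s q ^ r ∂(volume.restrict I).prod volume
      ≤ ∫⁻ q, ‖f (q.2 - q.1)‖ₑ ^ r * ‖F s (q.2 + q.1 - s)‖ₑ ^ r
          ∂(volume.restrict I).prod volume :=
        lintegral_mono fun q => by
          rw [← ENNReal.mul_rpow_of_nonneg _ _ hr, ← enorm_mul]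
          exact ENNReal.rpow_le_rpow (indicator_le_self _ _ s) hr
    _ = ∫⁻ t in I, ∫⁻ x, ‖f (x - t)‖ₑ ^ r * ‖F s (x + t - s)‖ₑ ^ r :=
        lintegral_prod _ (by fun_prop)
    _ ≤ ∫⁻ t, ∫⁻ x, ‖f (x - t)‖ₑ ^ r * ‖F s (x + t - s)‖ₑ ^ r :=
        setLIntegral_le_lintegral _ _
    _ = 2⁻¹ * ((∫⁻ u, ‖f u‖ₑ ^ r) * ∫⁻ v, ‖F s (v - s)‖ₑ ^ r) :=
        lintegral_lintegral_comp_sub_mul_comp_add (hf.enorm.pow_const r)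
          ((hFs.comp (measurable_sub_const s)).enorm.pow_const r)
    _ = 2⁻¹ * ((∫⁻ u, ‖f u‖ₑ ^ r) * ∫⁻ v, ‖F s v‖ₑ ^ r) := by
        rw [lintegral_sub_right_eq_self (fun v => ‖F s v‖ₑ ^ r)]

end duhamelKernel

theorem eLpNorm_free_mul_duhamel_le_of_measurable {p : ℝ≥0∞} (hp : 1 ≤ p) (hp' : p ≠ ⊤) (T : ℝ)
    {f : ℝ → ℂ} (hf : Measurable f) (hf_fin : eLpNorm f p volume ≠ ⊤) {F : ℝ → ℝ → ℂ}
    (hF : Measurable (Function.uncurry F)) :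
    eLpNorm
        (fun q : ℝ × ℝ => f (q.2 - q.1) * (∫ s in (0:ℝ)..q.1, F s (q.2 + q.1 - s))) p
        ((volume.restrict (Ioo (0:ℝ) T)).prod volume)
      ≤ (1/2 : ℝ≥0∞) ^ (1/p.toReal) * eLpNorm f p volume *
          (∫⁻ s in Ioo (0:ℝ) T, eLpNorm (F s) p volume) := by
  set r := p.toReal
  have hr : 1 ≤ r := ENNReal.toReal_mono hp' hp
  have hr_inv : 0 ≤ 1 / r := by positivity
  have hp₀ : p ≠ 0 := (zero_lt_one.trans_le hp).ne'
  set ρ := (volume.restrict (Ioo (0:ℝ) T)).prod (volume : Measure ℝ)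
  have hρ : ∀ᵐ q ∂ρ, q.1 ∈ Ioo 0 T :=
    Measure.quasiMeasurePreserving_fst.ae (ae_restrict_mem measurableSet_Ioo)
  have hslice : ∀ s, (∫⁻ q, duhamelKernel f F s q ^ r ∂ρ) ^ (1 / r)
      ≤ (1/2 : ℝ≥0∞) ^ (1 / r) * eLpNorm f p volume * eLpNorm (F s) p volume := fun s => by
    rw [eLpNorm_eq_lintegral_rpow_enorm_toReal hp₀ hp',
      eLpNorm_eq_lintegral_rpow_enorm_toReal hp₀ hp', ← ENNReal.mul_rpow_of_nonneg _ _ hr_inv,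
      ← ENNReal.mul_rpow_of_nonneg _ _ hr_inv, one_div 2, mul_assoc]
    gcongr
    exact lintegral_duhamelKernel_rpow_le hf hF _ s (by positivity)
  rw [eLpNorm_eq_lintegral_rpow_enorm_toReal hp₀ hp']
  calc (∫⁻ q, ‖f (q.2 - q.1) * ∫ s in (0:ℝ)..q.1, F s (q.2 + q.1 - s)‖ₑ ^ r ∂ρ) ^ (1 / r)
      ≤ (∫⁻ q, (∫⁻ s in Ioo 0 T, duhamelKernel f F s q) ^ r ∂ρ) ^ (1 / r) := by
        gcongr ?_ ^ _
        exact lintegral_mono_ae (hρ.mono fun q hq => by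
          gcongr; exact enorm_mul_intervalIntegral_le_lintegral_duhamelKernel hq)
    _ ≤ ∫⁻ s in Ioo 0 T, (∫⁻ q, duhamelKernel f F s q ^ r ∂ρ) ^ (1 / r) :=
        lintegral_lintegral_rpow_le (measurable_duhamelKernel hf hF) hr
    _ ≤ ∫⁻ s in Ioo 0 T, (1/2 : ℝ≥0∞) ^ (1 / r) * eLpNorm f p volume * eLpNorm (F s) p volume :=
        lintegral_mono hslice
    _ = _ := lintegral_const_mul' _ _
        (ENNReal.mul_ne_top (ENNReal.rpow_ne_top_of_nonneg hr_inv (by norm_num)) hf_fin)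

theorem bilinear_estimate_free_times_duhamel_general
    (p : ℝ≥0∞) (hp : 1 ≤ p) (hp' : p ≠ ⊤)
    (T : ℝ)
    (f : ℝ → ℂ) (hf : MemLp f p volume)
    (F : ℝ → ℝ → ℂ) (hFmeas : Measurable (Function.uncurry F)) :
    eLpNorm
        (fun q : ℝ × ℝ => f (q.2 - q.1) * (∫ s in (0:ℝ)..q.1, F s (q.2 + q.1 - s))) p
        ((volume.restrict (Ioo (0:ℝ) T)).prod volume)
      ≤ (1/2 : ℝ≥0∞) ^ (1/p.toReal) * eLpNorm f p volume *
          (∫⁻ s in Ioo (0:ℝ) T, eLpNorm (F s) p volume) := by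
  obtain ⟨hfm, hf_fin⟩ := hf
  have hfg := hfm.ae_eq_mk
  have hshift := (quasiMeasurePreserving_snd_sub_fst (volume.restrict (Ioo (0:ℝ) T))
    volume).ae_eq_comp hfg
  rw [eLpNorm_congr_ae hfg]
  refine (eLpNorm_congr_ae (hshift.mul (Filter.EventuallyEq.refl _ _))).trans_le ?_
  exact eLpNorm_free_mul_duhamel_le_of_measurable hp hp' T hfm.stronglyMeasurable_mk.measurable
    ((eLpNorm_congr_ae hfg).symm.trans_lt hf_fin).ne hFmeas

/-- Bilinear estimate in `L^p((0,T)×ℝ)` for the product of a free right-moving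
wave `f(x−t)` with the Duhamel term of the left-moving transport equation
`∂ₜu − ∂ₓu = F` with zero data. -/
theorem bilinear_estimate_free_times_duhamel
    (p : ℝ≥0∞) (hp : 1 ≤ p) (hp' : p ≠ ⊤)
    (T : ℝ) (hT : 0 < T)
    (f : ℝ → ℂ) (hf : MemLp f p volume)
    (F : ℝ → ℝ → ℂ) (hFmeas : Measurable (Function.uncurry F))
    (hFint : (∫⁻ s in Ioo (0:ℝ) T, eLpNorm (F s) p volume) < ⊤) :
    eLpNorm
        (fun q : ℝ × ℝ => f (q.2 - q.1) * (∫ s in (0:ℝ)..q.1, F s (q.2 + q.1 - s))) p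
        ((volume.restrict (Ioo (0:ℝ) T)).prod volume)
      ≤ (1/2 : ℝ≥0∞) ^ (1/p.toReal) * eLpNorm f p volume *
          (∫⁻ s in Ioo (0:ℝ) T, eLpNorm (F s) p volume) :=
  bilinear_estimate_free_times_duhamel_general p hp hp' T f hf F hFmeas
end

section
/- Let 1 ≤ p < ∞, T > 0, let u₊₀, u₋₀ ∈ L^p(ℝ; ℂ), and let F₊, F₋ : (0,T) × ℝ → ℂ be measurable with ∫₀ᵀ ‖F₊(s,·)‖_{L^p(ℝ)} ds < ∞ and ∫₀ᵀ ‖F₋(s,·)‖_{L^p(ℝ)} ds < ∞. Define u₊(t,x) = u₊₀(x−t) + ∫₀ᵗ F₊(s, x−(t−s)) ds and u₋(t,x) = u₋₀(x+t) + ∫₀ᵗ F₋(s, x+(t−s)) ds. Then (∫₀ᵀ ∫_ℝ |u₊(t,x) u₋(t,x)|^p dx dt)^{1/p} ≤ (1/2)^{1/p} (‖u₊₀‖_{L^p(ℝ)} + ∫₀ᵀ ‖F₊(s,·)‖_{L^p(ℝ)} ds)(‖u₋₀‖_{L^p(ℝ)} + ∫₀ᵀ ‖F₋(s,·)‖_{L^p(ℝ)}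 ds). -/
/-!
Along the characteristics, `|u₊(t, x)| ≤ g₊(x - t)` and `|u₋(t, x)| ≤ g₋(x + t)`, where `g₊(y)` is
`|u₊₀(y)|` plus the forcing `∫₀ᵀ |F₊(s, y + s)| ds` collected along the line through `y`, and
similarly for `g₋`. In the light-cone coordinates `a = x - t`, `b = x + t` (Jacobian `2`) the
product `g₊(x - t) g₋(x + t)` separates, so its `L^p` norm over `(0, T) × ℝ` is at most
`(1/2)^{1/p} ‖g₊‖_p ‖g₋‖_p`. Finally `‖g₊‖_p ≤ ‖u₊₀‖_p + ∫₀ᵀ ‖F₊(s)‖_p ds` by Minkowski's integral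
inequality and translation invariance, and likewise for `g₋`.
-/

open MeasureTheory Set
open scoped ENNReal

namespace ENNReal

theorem rpow_one_div_le_of_le_mul_rpow {I J : ℝ≥0∞} {P Q : ℝ} (hPQ : P.HolderConjugate Q)
    (hI : I ≠ ∞) (h : I ≤ J * I ^ (1 / Q)) : I ^ (1 / P) ≤ J := by
  rcases eq_or_ne I 0 with rfl | hI₀
  · simp [hPQ.pos]
  have hsplit : I = I ^ (1 / P) * I ^ (1 / Q) := by
    rw [← rpow_add _ _ hI₀ hI, one_div, one_div, hPQ.inv_add_inv_eq_one, rpow_one]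
  nth_rw 1 [hsplit] at h
  exact (ENNReal.mul_le_mul_iff_left (rpow_pos (pos_iff_ne_zero.2 hI₀) hI).ne'
    (rpow_ne_top_of_nonneg' (pos_iff_ne_zero.2 hI₀) hI)).mp h

theorem iSup_min_natCast_rpow_s5 (x : ℝ≥0∞) {P : ℝ} (hP : 0 < P) :
    ⨆ n : ℕ, min x n ^ P = x ^ P := by
  have := (orderIsoRpow P hP).map_iSup (fun n : ℕ => min x n)
  simp only [orderIsoRpow_apply] at this
  rw [← this, ← inf_iSup_eq, iSup_natCast]
  simp

end ENNReal

section Minkowski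

variable {α β : Type*} [MeasurableSpace α] [MeasurableSpace β] {μ : Measure α} {ν : Measure β}
  {f : β → α → ℝ≥0∞}

theorem lintegral_rpow_le_mul_of_le_lintegral [SFinite μ] [SFinite ν] {P Q : ℝ}
    (hPQ : P.HolderConjugate Q) (hf : Measurable (Function.uncurry f)) {ψ : α → ℝ≥0∞}
    (hψ : Measurable ψ) (hψf : ∀ a, ψ a ≤ ∫⁻ s, f s a ∂ν) :
    ∫⁻ a, ψ a ^ P ∂μ
      ≤ (∫⁻ s, (∫⁻ a, f s a ^ P ∂μ) ^ (1 / P) ∂ν) * (∫⁻ a, ψ a ^ P ∂μ) ^ (1 / Q) := by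
  have hP₁ : 0 ≤ P - 1 := hPQ.sub_one_pos.le
  calc ∫⁻ a, ψ a ^ P ∂μ = ∫⁻ a, ψ a * ψ a ^ (P - 1) ∂μ := by
        refine lintegral_congr fun a => ?_
        nth_rw 1 [← add_sub_cancel 1 P, ENNReal.rpow_add_of_nonneg _ _ zero_le_one hP₁,
          ENNReal.rpow_one]
    _ ≤ ∫⁻ a, (∫⁻ s, f s a ∂ν) * ψ a ^ (P - 1) ∂μ := by gcongr with a; exact hψf a
    _ = ∫⁻ s, ∫⁻ a, f s a * ψ a ^ (P - 1) ∂μ ∂ν := by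
        rw [← lintegral_lintegral_swap (by fun_prop)]
        refine lintegral_congr fun a => ?_
        exact (lintegral_mul_const _ (hf.comp measurable_prodMk_right)).symm
    _ ≤ ∫⁻ s, (∫⁻ a, f s a ^ P ∂μ) ^ (1 / P) * (∫⁻ a, (ψ a ^ (P - 1)) ^ Q ∂μ) ^ (1 / Q) ∂ν :=
        lintegral_mono fun s => ENNReal.lintegral_mul_le_Lp_mul_Lq μ hPQ
          (hf.comp measurable_prodMk_left).aemeasurable (hψ.pow_const _).aemeasurable
    _ = _ := by
        simp_rw [← ENNReal.rpow_mul, hPQ.sub_one_mul_conj]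
        exact lintegral_mul_const _ ((hf.pow_const P).lintegral_prod_right'.pow_const _)

theorem lintegral_rpow_lintegral_le [SigmaFinite μ] [SFinite ν] {P : ℝ} (hP : 1 < P)
    (hf : Measurable (Function.uncurry f)) :
    ∫⁻ a, (∫⁻ s, f s a ∂ν) ^ P ∂μ ≤ (∫⁻ s, (∫⁻ a, f s a ^ P ∂μ) ^ (1 / P) ∂ν) ^ P := by
  have hPQ := Real.HolderConjugate.conjExponent hP
  have hP₀ : 0 < P := hPQ.pos
  have hΦ : Measurable fun a => ∫⁻ s, f s a ∂ν := hf.lintegral_prod_left'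
  -- Truncating at height `n` on a set of finite measure makes the left side finite, which lets
  -- the Hölder bound `I ≤ J I^{1/Q}` be divided by `I^{1/Q}`.
  refine lintegral_le_of_forall_fin_meas_le _ fun S hS hμS => ?_
  have htrunc : ∀ n : ℕ, ∫⁻ a in S, min (∫⁻ s, f s a ∂ν) n ^ P ∂μ
      ≤ (∫⁻ s, (∫⁻ a, f s a ^ P ∂μ) ^ (1 / P) ∂ν) ^ P := by
    intro n
    have hfin : ∫⁻ a in S, min (∫⁻ s, f s a ∂ν) n ^ P ∂μ ≠ ∞ := by
      refine ne_top_of_le_ne_top (b := ∫⁻ _ in S, (n : ℝ≥0∞) ^ P ∂μ) ?_ ?_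
      · simp [ENNReal.mul_eq_top, hμS, hP₀.le]
      · exact lintegral_mono fun a => ENNReal.rpow_le_rpow (min_le_right _ _) hP₀.le
    rw [← ENNReal.rpow_inv_le_iff hP₀, ← one_div]
    refine (ENNReal.rpow_one_div_le_of_le_mul_rpow hPQ hfin
      (lintegral_rpow_le_mul_of_le_lintegral hPQ hf (hΦ.min measurable_const)
        fun a => min_le_left _ _)).trans ?_
    gcongr
    exact Measure.restrict_le_self
  calc ∫⁻ a in S, (∫⁻ s, f s a ∂ν) ^ P ∂μ
      = ⨆ n : ℕ, ∫⁻ a in S, min (∫⁻ s, f s a ∂ν) n ^ P ∂μ := by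
        rw [← lintegral_iSup (fun n => (hΦ.min measurable_const).pow_const P)
          fun m n hmn a => by gcongr]
        exact lintegral_congr fun a => (ENNReal.iSup_min_natCast_rpow_s5 _ hP₀).symm
    _ ≤ _ := iSup_le htrunc

theorem eLpNorm_lintegral_le [SigmaFinite μ] [SFinite ν] {p : ℝ≥0∞} (hp : 1 ≤ p) (hp' : p ≠ ∞)
    (hf : Measurable (Function.uncurry f)) :
    eLpNorm (fun a => ∫⁻ s, f s a ∂ν) p μ ≤ ∫⁻ s, eLpNorm (f s) p μ ∂ν := by
  rcases hp.eq_or_lt with rfl | hp₁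
  · simp only [eLpNorm_one_eq_lintegral_enorm, enorm_eq_self]
    exact (lintegral_lintegral_swap (f := fun a s => f s a)
      (hf.comp measurable_swap).aemeasurable).le
  have hP : 1 < p.toReal := by
    simpa using (ENNReal.toReal_lt_toReal ENNReal.one_ne_top hp').2 hp₁
  have hp₀ : p ≠ 0 := (zero_lt_one.trans hp₁).ne'
  simp only [eLpNorm_eq_lintegral_rpow_enorm_toReal hp₀ hp', enorm_eq_self, one_div]
  rw [ENNReal.rpow_inv_le_iff (zero_lt_one.trans hP)]
  simpa only [one_div] using lintegral_rpow_lintegral_le hP hf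

end Minkowski

theorem lintegral_comp_add_mul {H : ℝ → ℝ≥0∞} (hH : Measurable H) (a : ℝ) {c : ℝ}
    (hc : c ≠ 0) : ∫⁻ t, H (a + c * t) = ENNReal.ofReal |c⁻¹| * ∫⁻ b, H b := by
  rw [← lintegral_map (f := fun u => H (a + u)) (by fun_prop) (by fun_prop),
    Real.map_volume_mul_left hc, lintegral_smul_measure,
    lintegral_add_left_eq_self (fun b => H b) a, smul_eq_mul]

theorem lintegral_lintegral_comp_sub_mul_comp_add_s5 {G H : ℝ → ℝ≥0∞} (hG : Measurable G)
    (hH : Measurable H) :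
    ∫⁻ t, ∫⁻ x, G (x - t) * H (x + t) = 2⁻¹ * (∫⁻ a, G a) * ∫⁻ b, H b := by
  have hshift : ∀ t, ∫⁻ x, G (x - t) * H (x + t) = ∫⁻ a, G a * H (a + 2 * t) := fun t => by
    rw [← lintegral_add_right_eq_self _ t]
    refine lintegral_congr fun a => ?_
    rw [add_sub_cancel_right, add_assoc, ← two_mul]
  calc ∫⁻ t, ∫⁻ x, G (x - t) * H (x + t)
      = ∫⁻ a, ∫⁻ t, G a * H (a + 2 * t) := by
        simp_rw [hshift]
        exact lintegral_lintegral_swap (by fun_prop)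
    _ = ∫⁻ a, G a * (2⁻¹ * ∫⁻ b, H b) := by
        refine lintegral_congr fun a => ?_
        rw [lintegral_const_mul _ (by fun_prop), lintegral_comp_add_mul hH a two_ne_zero, abs_inv,
          abs_two, ENNReal.ofReal_inv_of_pos two_pos, ENNReal.ofReal_ofNat]
    _ = 2⁻¹ * (∫⁻ a, G a) * ∫⁻ b, H b := by
        rw [lintegral_mul_const _ hG]
        ring

theorem AEMeasurable.exists_measurable_ge_ae_eq {α : Type*} [MeasurableSpace α] {μ : Measure α}
    {f : α → ℝ≥0∞} (hf : AEMeasurable f μ) : ∃ g, Measurable g ∧ f ≤ g ∧ g =ᵐ[μ] f := by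
  classical
  set N := toMeasurable μ {a | f a ≠ hf.mk f a}
  have hN : μ N = 0 := by
    rw [measure_toMeasurable]
    exact hf.ae_eq_mk
  refine ⟨N.piecewise ⊤ (hf.mk f), measurable_const.piecewise (measurableSet_toMeasurable _ _)
    hf.measurable_mk, fun a => ?_, ?_⟩
  · by_cases ha : a ∈ N
    · simp [ha]
    · simpa [ha] using (not_not.1 fun h => ha (subset_toMeasurable _ _ h)).le
  · filter_upwards [measure_eq_zero_iff_ae_notMem.1 hN, hf.ae_eq_mk] with a ha hfa
    simp [ha, hfa]

theorem eLpNorm_le_of_enorm_le_comp_sub_mul_comp_add {E : Type*} [ENorm E] {p : ℝ≥0∞}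
    (hp₀ : p ≠ 0) (hp : p ≠ ∞) {S : Set ℝ} (hS : MeasurableSet S) {G H : ℝ → ℝ≥0∞}
    (hG : AEMeasurable G) (hH : AEMeasurable H) {f : ℝ × ℝ → E}
    (hf : ∀ t ∈ S, ∀ x, ‖f (t, x)‖ₑ ≤ G (x - t) * H (x + t)) :
    eLpNorm f p ((volume.restrict S).prod volume)
      ≤ (1 / 2) ^ (1 / p.toReal) * eLpNorm G p volume * eLpNorm H p volume := by
  -- Measurable majorants keep the pointwise bound and make Tonelli available.
  obtain ⟨G', hG'm, hGG', hG'G⟩ := hG.exists_measurable_ge_ae_eq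
  obtain ⟨H', hH'm, hHH', hH'H⟩ := hH.exists_measurable_ge_ae_eq
  set P := p.toReal
  have hP : 0 < P := ENNReal.toReal_pos hp₀ hp
  rw [← eLpNorm_congr_ae hG'G, ← eLpNorm_congr_ae hH'H]
  simp only [eLpNorm_eq_lintegral_rpow_enorm_toReal hp₀ hp, enorm_eq_self]
  have hbound : ∫⁻ q, ‖f q‖ₑ ^ P ∂(volume.restrict S).prod volume
      ≤ 2⁻¹ * (∫⁻ a, G' a ^ P) * ∫⁻ b, H' b ^ P := by
    calc ∫⁻ q, ‖f q‖ₑ ^ P ∂(volume.restrict S).prod volume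
        ≤ ∫⁻ t in S, ∫⁻ x, ‖f (t, x)‖ₑ ^ P := lintegral_prod_le _
      _ ≤ ∫⁻ t in S, ∫⁻ x, G' (x - t) ^ P * H' (x + t) ^ P := by
        refine setLIntegral_mono' hS fun t ht => lintegral_mono fun x => ?_
        rw [← ENNReal.mul_rpow_of_nonneg _ _ hP.le]
        exact ENNReal.rpow_le_rpow ((hf t ht x).trans (mul_le_mul' (hGG' _) (hHH' _))) hP.le
      _ ≤ ∫⁻ t, ∫⁻ x, G' (x - t) ^ P * H' (x + t) ^ P := setLIntegral_le_lintegral _ _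
      _ = _ := lintegral_lintegral_comp_sub_mul_comp_add_s5 (hG'm.pow_const P) (hH'm.pow_const P)
  calc (∫⁻ q, ‖f q‖ₑ ^ P ∂(volume.restrict S).prod volume) ^ (1 / P)
      ≤ (2⁻¹ * (∫⁻ a, G' a ^ P) * ∫⁻ b, H' b ^ P) ^ (1 / P) := by gcongr
    _ = _ := by
        rw [ENNReal.mul_rpow_of_nonneg _ _ (by positivity),
          ENNReal.mul_rpow_of_nonneg _ _ (by positivity), one_div 2]

section Transport

variable {E : Type*} [NormedAddCommGroup E]

-- Dominates the Duhamel solution of `∂ₜu + c ∂ₓu = F` on `[0, T]` along the characteristic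
-- `x - c t = y`; `c = 1` and `c = -1` give `u₊` and `u₋`.
noncomputable def transportMajorant (c T : ℝ) (u₀ : ℝ → E) (F : ℝ → ℝ → E) (y : ℝ) : ℝ≥0∞ :=
  ‖u₀ y‖ₑ + ∫⁻ s in Ioo 0 T, ‖F s (y + c * s)‖ₑ

theorem enorm_duhamel_le_transportMajorant [NormedSpace ℝ E] {c T t : ℝ} (ht : t ∈ Icc 0 T)
    (u₀ : ℝ → E) (F : ℝ → ℝ → E) (x : ℝ) :
    ‖u₀ (x - c * t) + ∫ s in 0..t, F s (x - c * (t - s))‖ₑ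
      ≤ transportMajorant c T u₀ F (x - c * t) := by
  refine (enorm_add_le _ _).trans (add_le_add le_rfl ?_)
  rw [intervalIntegral.integral_of_le ht.1]
  calc ‖∫ s in Ioc 0 t, F s (x - c * (t - s))‖ₑ
      ≤ ∫⁻ s in Ioc 0 t, ‖F s (x - c * (t - s))‖ₑ := enorm_integral_le_lintegral_enorm _
    _ ≤ ∫⁻ s in Ioc 0 T, ‖F s (x - c * (t - s))‖ₑ := lintegral_mono_set (Ioc_subset_Ioc_right ht.2)
    _ = ∫⁻ s in Ioo 0 T, ‖F s (x - c * t + c * s)‖ₑ := by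
        rw [setLIntegral_congr Ioo_ae_eq_Ioc.symm]
        ring_nf

section Measurable

variable [MeasurableSpace E] [BorelSpace E]

theorem measurable_uncurry_enorm_comp_add_mul (c : ℝ) {F : ℝ → ℝ → E}
    (hF : Measurable (Function.uncurry F)) :
    Measurable (Function.uncurry fun s y => ‖F s (y + c * s)‖ₑ) :=
  (hF.comp (measurable_fst.prodMk (measurable_snd.add (measurable_fst.const_mul c)))).enorm

theorem aemeasurable_transportMajorant (c T : ℝ) {u₀ : ℝ → E} (hu₀ : AEStronglyMeasurable u₀)
    {F : ℝ → ℝ → E} (hF : Measurable (Function.uncurry F)) :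
    AEMeasurable (transportMajorant c T u₀ F) :=
  hu₀.enorm.add (measurable_uncurry_enorm_comp_add_mul c hF).lintegral_prod_left'.aemeasurable

theorem eLpNorm_transportMajorant_le [SecondCountableTopology E] {p : ℝ≥0∞} (hp : 1 ≤ p)
    (hp' : p ≠ ∞) (c T : ℝ) {u₀ : ℝ → E} (hu₀ : AEStronglyMeasurable u₀) {F : ℝ → ℝ → E}
    (hF : Measurable (Function.uncurry F)) :
    eLpNorm (transportMajorant c T u₀ F) p volume
      ≤ eLpNorm u₀ p volume + ∫⁻ s in Ioo 0 T, eLpNorm (F s) p volume := by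
  have hFc := measurable_uncurry_enorm_comp_add_mul c hF
  calc eLpNorm (transportMajorant c T u₀ F) p volume
      ≤ eLpNorm (fun y => ‖u₀ y‖ₑ) p volume
        + eLpNorm (fun y => ∫⁻ s in Ioo 0 T, ‖F s (y + c * s)‖ₑ) p volume :=
        eLpNorm_add_le (f := fun y => ‖u₀ y‖ₑ)
          (g := fun y => ∫⁻ s in Ioo 0 T, ‖F s (y + c * s)‖ₑ) hu₀.enorm.aestronglyMeasurable
          hFc.lintegral_prod_left'.aestronglyMeasurable hp
    _ ≤ eLpNorm u₀ p volume + ∫⁻ s in Ioo 0 T, eLpNorm (fun y => ‖F s (y + c * s)‖ₑ) p volume := by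
        rw [eLpNorm_enorm]
        gcongr
        exact eLpNorm_lintegral_le hp hp' hFc
    _ = eLpNorm u₀ p volume + ∫⁻ s in Ioo 0 T, eLpNorm (F s) p volume := by
        congr 1
        refine lintegral_congr fun s => ?_
        rw [eLpNorm_enorm]
        exact eLpNorm_comp_measurePreserving (hF.comp measurable_prodMk_left).aestronglyMeasurable
          (measurePreserving_add_right volume (c * s))

end Measurable

end Transport

theorem bilinear_estimate_mild_solutions_general
    (p : ℝ≥0∞) (hp : 1 ≤ p) (hp' : p ≠ ⊤)
    (T : ℝ)
    (up0 um0 : ℝ → ℂ)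
    (hup0 : MemLp up0 p volume) (hum0 : MemLp um0 p volume)
    (Fp Fm : ℝ → ℝ → ℂ)
    (hFpmeas : Measurable (Function.uncurry Fp))
    (hFmmeas : Measurable (Function.uncurry Fm))
    (up um : ℝ → ℝ → ℂ)
    (hup : ∀ t x : ℝ, up t x = up0 (x - t) + (∫ s in (0:ℝ)..t, Fp s (x - (t - s))))
    (hum : ∀ t x : ℝ, um t x = um0 (x + t) + (∫ s in (0:ℝ)..t, Fm s (x + (t - s)))) :
    eLpNorm (fun q : ℝ × ℝ => up q.1 q.2 * um q.1 q.2) p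
        ((volume.restrict (Ioo (0:ℝ) T)).prod volume)
      ≤ (1/2 : ℝ≥0∞) ^ (1/p.toReal) *
          (eLpNorm up0 p volume + (∫⁻ s in Ioo (0:ℝ) T, eLpNorm (Fp s) p volume)) *
          (eLpNorm um0 p volume + (∫⁻ s in Ioo (0:ℝ) T, eLpNorm (Fm s) p volume)) := by
  have hup_le : ∀ t ∈ Ioo 0 T, ∀ x, ‖up t x‖ₑ ≤ transportMajorant 1 T up0 Fp (x - t) := by
    intro t ht x
    have h := enorm_duhamel_le_transportMajorant (c := 1) (Ioo_subset_Icc_self ht) up0 Fp x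
    simp only [one_mul] at h
    rwa [hup]
  have hum_le : ∀ t ∈ Ioo 0 T, ∀ x, ‖um t x‖ₑ ≤ transportMajorant (-1) T um0 Fm (x + t) := by
    intro t ht x
    have h := enorm_duhamel_le_transportMajorant (c := -1) (Ioo_subset_Icc_self ht) um0 Fm x
    simp only [neg_one_mul, sub_neg_eq_add] at h
    rwa [hum]
  have hprod : ∀ t ∈ Ioo 0 T, ∀ x, ‖up t x * um t x‖ₑ
      ≤ transportMajorant 1 T up0 Fp (x - t) * transportMajorant (-1) T um0 Fm (x + t) :=
    fun t ht x => (enorm_mul _ _).trans_le (mul_le_mul' (hup_le t ht x) (hum_le t ht x))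
  calc eLpNorm (fun q : ℝ × ℝ => up q.1 q.2 * um q.1 q.2) p
        ((volume.restrict (Ioo (0:ℝ) T)).prod volume)
      ≤ (1/2 : ℝ≥0∞) ^ (1/p.toReal) * eLpNorm (transportMajorant 1 T up0 Fp) p volume
          * eLpNorm (transportMajorant (-1) T um0 Fm) p volume :=
        eLpNorm_le_of_enorm_le_comp_sub_mul_comp_add (zero_lt_one.trans_le hp).ne' hp'
          measurableSet_Ioo (aemeasurable_transportMajorant 1 T hup0.1 hFpmeas)
          (aemeasurable_transportMajorant (-1) T hum0.1 hFmmeas) hprod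
    _ ≤ _ := by
        gcongr
        · exact eLpNorm_transportMajorant_le hp hp' 1 T hup0.1 hFpmeas
        · exact eLpNorm_transportMajorant_le hp hp' (-1) T hum0.1 hFmmeas

/-- Bilinear estimate for the Duhamel (mild) solutions `u₊` of
`∂ₜu₊ + ∂ₓu₊ = F₊`, `u₊(0) = u₊₀`, and `u₋` of `∂ₜu₋ − ∂ₓu₋ = F₋`,
`u₋(0) = u₋₀`: the `L^p` norm of `u₊u₋` over `(0,T)×ℝ` is bounded by
`(1/2)^{1/p}(‖u₊₀‖_p + ∫₀ᵀ‖F₊(s)‖_p ds)(‖u₋₀‖_p + ∫₀ᵀ‖F₋(s)‖_p ds)`. -/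
theorem bilinear_estimate_mild_solutions
    (p : ℝ≥0∞) (hp : 1 ≤ p) (hp' : p ≠ ⊤)
    (T : ℝ) (hT : 0 < T)
    (up0 um0 : ℝ → ℂ)
    (hup0 : MemLp up0 p volume) (hum0 : MemLp um0 p volume)
    (Fp Fm : ℝ → ℝ → ℂ)
    (hFpmeas : Measurable (Function.uncurry Fp))
    (hFmmeas : Measurable (Function.uncurry Fm))
    (hFpint : (∫⁻ s in Ioo (0:ℝ) T, eLpNorm (Fp s) p volume) < ⊤)
    (hFmint : (∫⁻ s in Ioo (0:ℝ) T, eLpNorm (Fm s) p volume) < ⊤)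
    (up um : ℝ → ℝ → ℂ)
    (hup : ∀ t x : ℝ, up t x = up0 (x - t) + (∫ s in (0:ℝ)..t, Fp s (x - (t - s))))
    (hum : ∀ t x : ℝ, um t x = um0 (x + t) + (∫ s in (0:ℝ)..t, Fm s (x + (t - s)))) :
    eLpNorm (fun q : ℝ × ℝ => up q.1 q.2 * um q.1 q.2) p
        ((volume.restrict (Ioo (0:ℝ) T)).prod volume)
      ≤ (1/2 : ℝ≥0∞) ^ (1/p.toReal) *
          (eLpNorm up0 p volume + (∫⁻ s in Ioo (0:ℝ) T, eLpNorm (Fp s) p volume)) *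
          (eLpNorm um0 p volume + (∫⁻ s in Ioo (0:ℝ) T, eLpNorm (Fm s) p volume)) :=
  bilinear_estimate_mild_solutions_general p hp hp' T up0 um0 hup0 hum0 Fp Fm hFpmeas hFmmeas up um
    hup hum
end

section
/- Let T > 0 and let u₊, u₋, v₊, v₋ : [0,T] × ℝ → ℂ be bounded measurable functions and u₊₀, u₋₀, v₊₀, v₋₀ : ℝ → ℂ be bounded measurable functions such that for all (t,x) ∈ [0,T] × ℝ: u₊(t,x) = u₊₀(x−t) + ∫₀ᵗ (u₊v₊)(s, x−(t−s)) ds, u₋(t,x) = u₋₀(x+t) + ∫₀ᵗ (u₋v₋)(s, x+(t−s)) ds, v₊(t,x) = v₊₀(x−t) + ∫₀ᵗ (u₊v₊)(s, x−(t−s)) ds, and v₋(t,x) = v₋₀(x+t) + ∫₀ᵗ (u₋v₋)(s, x+(t−s)) ds. Suppose that for some x₀ ∈ ℝ and R > 0 one has u₊₀(x) = u₋₀(x) = v₊₀(x) = v₋₀(x) = 0 for all x with |x − x₀| < R. Then for every t with 0 < t < min(T, R) and every x with |x − x₀| < R − t, one has u₊(t,x) = u₋(t,x) = v₊(t,x)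 = v₋(t,x) = 0. -/
/-!
Each characteristic `s ↦ x - e * (t - s)` with `|e| ≤ 1` through a point of the backward cone
`|x - x₀| < R - t` stays in the cone and starts where the data vanish. So on the cone the Duhamel
formula for `u` has no data term, and iterating it with `‖v‖ ≤ C` gives `‖u t x‖ ≤ M (C t)ⁿ / n!`
for every `n`, whence `u = 0`. There `v` has the same source and data as `u`, so `v = u = 0`.
-/

open MeasureTheory Set Filter Topology
open scoped Nat

/-- Duhamel form of `∂ₜu + e ∂ₓu = F`, `u(0) = u₀`, on `[0, T] × ℝ`. -/
def IsMildSolution (T e : ℝ) (F u : ℝ → ℝ → ℂ) (u₀ : ℝ → ℂ) : Prop :=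
  ∀ t ∈ Icc (0:ℝ) T, ∀ x : ℝ, u t x = u₀ (x - e * t) + ∫ s in (0:ℝ)..t, F s (x - e * (t - s))

theorem integral_mul_pow_div_factorial (c t : ℝ) (n : ℕ) :
    ∫ s in (0:ℝ)..t, c * (c * s) ^ n / n ! = (c * t) ^ (n + 1) / (n + 1)! := by
  have : ∀ s : ℝ, c * (c * s) ^ n / n ! = c ^ (n + 1) / n ! * s ^ n := fun s => by ring
  simp_rw [this]
  rw [intervalIntegral.integral_const_mul, integral_pow, Nat.factorial_succ]
  push_cast
  field_simp
  ring

theorem abs_sub_characteristic_lt {x₀ R e t s x : ℝ} (he : |e| ≤ 1) (hst : s ≤ t)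
    (hx : |x - x₀| < R - t) : |x - e * (t - s) - x₀| < R - s := by
  have : |e * (t - s)| ≤ t - s := by
    rw [abs_mul, abs_of_nonneg (sub_nonneg.2 hst)]
    exact mul_le_of_le_one_left (sub_nonneg.2 hst) he
  calc |x - e * (t - s) - x₀| = |(x - x₀) - e * (t - s)| := by ring_nf
    _ ≤ |x - x₀| + |e * (t - s)| := abs_sub _ _
    _ < R - s := by linarith

namespace IsMildSolution

variable {T e x₀ R C M : ℝ} {F u v a : ℝ → ℝ → ℂ} {u₀ v₀ : ℝ → ℂ}

theorem eq_of_eqOn_ball (hu : IsMildSolution T e F u u₀) (hv : IsMildSolution T e F v v₀)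
    (he : |e| ≤ 1) (h₀ : ∀ x, |x - x₀| < R → v₀ x = u₀ x) :
    ∀ t ∈ Icc (0:ℝ) T, ∀ x, |x - x₀| < R - t → v t x = u t x := by
  intro t ht x hx
  rw [hu t ht x, hv t ht x, h₀ _ (by simpa using abs_sub_characteristic_lt he ht.1 hx)]

theorem norm_le_pow_div_factorial (hu : IsMildSolution T e (fun s y => u s y * a s y) u u₀)
    (he : |e| ≤ 1) (ha : ∀ t ∈ Icc (0:ℝ) T, ∀ x, ‖a t x‖ ≤ C)
    (hM : ∀ t ∈ Icc (0:ℝ) T, ∀ x, ‖u t x‖ ≤ M) (h₀ : ∀ x, |x - x₀| < R → u₀ x = 0) (n : ℕ) :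
    ∀ t ∈ Icc (0:ℝ) T, ∀ x, |x - x₀| < R - t → ‖u t x‖ ≤ M * (C * t) ^ n / n ! := by
  induction n with
  | zero => intro t ht x _; simpa using hM t ht x
  | succ n ih =>
    intro t ht x hx
    have hsource : ∀ s ∈ Ioc 0 t, ‖u s (x - e * (t - s)) * a s (x - e * (t - s))‖ ≤
        M * (C * (C * s) ^ n / n !) := by
      intro s hs
      have hsT : s ∈ Icc 0 T := ⟨hs.1.le, hs.2.trans ht.2⟩
      have hus := ih s hsT _ (abs_sub_characteristic_lt he hs.2 hx)
      calc _ = ‖u s (x - e * (t - s))‖ * ‖a s (x - e * (t - s))‖ := norm_mul _ _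
        _ ≤ M * (C * s) ^ n / n ! * C :=
          mul_le_mul hus (ha s hsT _) (norm_nonneg _) ((norm_nonneg _).trans hus)
        _ = _ := by ring
    rw [hu t ht x, h₀ _ (by simpa using abs_sub_characteristic_lt he ht.1 hx), zero_add]
    calc _ ≤ ∫ s in (0:ℝ)..t, M * (C * (C * s) ^ n / n !) :=
          intervalIntegral.norm_integral_le_of_norm_le ht.1 (ae_of_all _ hsource)
            (by apply Continuous.intervalIntegrable; fun_prop)
      _ = _ := by rw [intervalIntegral.integral_const_mul, integral_mul_pow_div_factorial,
          mul_div_assoc]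

theorem eq_zero_of_bounded (hu : IsMildSolution T e (fun s y => u s y * a s y) u u₀)
    (he : |e| ≤ 1) (ha : ∀ t ∈ Icc (0:ℝ) T, ∀ x, ‖a t x‖ ≤ C)
    (hM : ∀ t ∈ Icc (0:ℝ) T, ∀ x, ‖u t x‖ ≤ M) (h₀ : ∀ x, |x - x₀| < R → u₀ x = 0) :
    ∀ t ∈ Icc (0:ℝ) T, ∀ x, |x - x₀| < R - t → u t x = 0 := by
  intro t ht x hx
  have hlim : Tendsto (fun n : ℕ => M * (C * t) ^ n / n !) atTop (𝓝 0) := by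
    simpa [mul_div_assoc] using (FloorSemiring.tendsto_pow_div_factorial_atTop (C * t)).const_mul M
  exact norm_le_zero_iff.1 <| ge_of_tendsto' hlim fun n =>
    hu.norm_le_pow_div_factorial he ha hM h₀ n t ht x hx

theorem eq_zero_of_bounded_pair (hu : IsMildSolution T e (fun s y => u s y * v s y) u u₀)
    (hv : IsMildSolution T e (fun s y => u s y * v s y) v v₀) (he : |e| ≤ 1)
    (hbdd : ∃ C, ∀ t ∈ Icc (0:ℝ) T, ∀ x, ‖u t x‖ ≤ C ∧ ‖v t x‖ ≤ C)
    (h₀ : ∀ x, |x - x₀| < R → u₀ x = 0 ∧ v₀ x = 0) :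
    ∀ t ∈ Icc (0:ℝ) T, ∀ x, |x - x₀| < R - t → u t x = 0 ∧ v t x = 0 := by
  obtain ⟨C, hC⟩ := hbdd
  have hu0 := hu.eq_zero_of_bounded he (fun t ht x => (hC t ht x).2)
    (fun t ht x => (hC t ht x).1) fun x hx => (h₀ x hx).1
  have hvu := hu.eq_of_eqOn_ball hv he fun x hx => by rw [(h₀ x hx).1, (h₀ x hx).2]
  intro t ht x hx
  exact ⟨hu0 t ht x hx, (hvu t ht x hx).trans (hu0 t ht x hx)⟩

end IsMildSolution

theorem finite_speed_of_propagation_general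
    (T : ℝ)
    (up um vp vm : ℝ → ℝ → ℂ)
    (up0 um0 vp0 vm0 : ℝ → ℂ)
    (hbdd : ∃ C : ℝ, ∀ t ∈ Icc (0:ℝ) T, ∀ x : ℝ,
      ‖up t x‖ ≤ C ∧ ‖um t x‖ ≤ C ∧ ‖vp t x‖ ≤ C ∧ ‖vm t x‖ ≤ C)
    (hequp : ∀ t ∈ Icc (0:ℝ) T, ∀ x : ℝ,
      up t x = up0 (x - t) +
        (∫ s in (0:ℝ)..t, up s (x - (t - s)) * vp s (x - (t - s))))
    (hequm : ∀ t ∈ Icc (0:ℝ) T, ∀ x : ℝ,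
      um t x = um0 (x + t) +
        (∫ s in (0:ℝ)..t, um s (x + (t - s)) * vm s (x + (t - s))))
    (heqvp : ∀ t ∈ Icc (0:ℝ) T, ∀ x : ℝ,
      vp t x = vp0 (x - t) +
        (∫ s in (0:ℝ)..t, up s (x - (t - s)) * vp s (x - (t - s))))
    (heqvm : ∀ t ∈ Icc (0:ℝ) T, ∀ x : ℝ,
      vm t x = vm0 (x + t) +
        (∫ s in (0:ℝ)..t, um s (x + (t - s)) * vm s (x + (t - s))))
    (x₀ R : ℝ)
    (hzero : ∀ x : ℝ, |x - x₀| < R →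
      up0 x = 0 ∧ um0 x = 0 ∧ vp0 x = 0 ∧ vm0 x = 0) :
    ∀ t x : ℝ, 0 < t → t < min T R → |x - x₀| < R - t →
      up t x = 0 ∧ um t x = 0 ∧ vp t x = 0 ∧ vm t x = 0 := by
  obtain ⟨C, hC⟩ := hbdd
  have hplus := IsMildSolution.eq_zero_of_bounded_pair (e := 1) (x₀ := x₀) (R := R)
    (by simpa [IsMildSolution] using hequp) (by simpa [IsMildSolution] using heqvp) (by simp)
    ⟨C, fun t ht x => ⟨(hC t ht x).1, (hC t ht x).2.2.1⟩⟩
    fun x hx => ⟨(hzero x hx).1, (hzero x hx).2.2.1⟩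
  have hminus := IsMildSolution.eq_zero_of_bounded_pair (e := -1) (x₀ := x₀) (R := R)
    (by simpa only [IsMildSolution, neg_mul, one_mul, sub_neg_eq_add] using hequm)
    (by simpa only [IsMildSolution, neg_mul, one_mul, sub_neg_eq_add] using heqvm) (by simp)
    ⟨C, fun t ht x => ⟨(hC t ht x).2.1, (hC t ht x).2.2.2⟩⟩
    fun x hx => ⟨(hzero x hx).2.1, (hzero x hx).2.2.2⟩
  intro t x ht htTR hx
  have htT : t ∈ Icc 0 T := ⟨ht.le, htTR.le.trans (min_le_left T R)⟩
  obtain ⟨hup, hvp⟩ := hplus t htT x hx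
  obtain ⟨hum, hvm⟩ := hminus t htT x hx
  exact ⟨hup, hum, hvp, hvm⟩

/-- Finite speed of propagation for the coupled system of transport equations
`∂ₜu± ± ∂ₓu± = u±v±`, `∂ₜv± ± ∂ₓv± = u±v±` (in Duhamel integral form): if the
bounded measurable solution has initial data vanishing on `{|x−x₀| < R}`, then
it vanishes on the backward light cone `{|x−x₀| < R−t}`. -/
theorem finite_speed_of_propagation
    (T : ℝ) (hT : 0 < T)
    (up um vp vm : ℝ → ℝ → ℂ)
    (up0 um0 vp0 vm0 : ℝ → ℂ)
    (hupmeas : Measurable (Function.uncurry up))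
    (hummeas : Measurable (Function.uncurry um))
    (hvpmeas : Measurable (Function.uncurry vp))
    (hvmmeas : Measurable (Function.uncurry vm))
    (hup0meas : Measurable up0) (hum0meas : Measurable um0)
    (hvp0meas : Measurable vp0) (hvm0meas : Measurable vm0)
    (hbdd : ∃ C : ℝ, ∀ t ∈ Icc (0:ℝ) T, ∀ x : ℝ,
      ‖up t x‖ ≤ C ∧ ‖um t x‖ ≤ C ∧ ‖vp t x‖ ≤ C ∧ ‖vm t x‖ ≤ C)
    (hbdd0 : ∃ C : ℝ, ∀ x : ℝ,
      ‖up0 x‖ ≤ C ∧ ‖um0 x‖ ≤ C ∧ ‖vp0 x‖ ≤ C ∧ ‖vm0 x‖ ≤ C)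
    (hequp : ∀ t ∈ Icc (0:ℝ) T, ∀ x : ℝ,
      up t x = up0 (x - t) +
        (∫ s in (0:ℝ)..t, up s (x - (t - s)) * vp s (x - (t - s))))
    (hequm : ∀ t ∈ Icc (0:ℝ) T, ∀ x : ℝ,
      um t x = um0 (x + t) +
        (∫ s in (0:ℝ)..t, um s (x + (t - s)) * vm s (x + (t - s))))
    (heqvp : ∀ t ∈ Icc (0:ℝ) T, ∀ x : ℝ,
      vp t x = vp0 (x - t) +
        (∫ s in (0:ℝ)..t, up s (x - (t - s)) * vp s (x - (t - s))))
    (heqvm : ∀ t ∈ Icc (0:ℝ) T, ∀ x : ℝ,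
      vm t x = vm0 (x + t) +
        (∫ s in (0:ℝ)..t, um s (x + (t - s)) * vm s (x + (t - s))))
    (x₀ R : ℝ) (hR : 0 < R)
    (hzero : ∀ x : ℝ, |x - x₀| < R →
      up0 x = 0 ∧ um0 x = 0 ∧ vp0 x = 0 ∧ vm0 x = 0) :
    ∀ t x : ℝ, 0 < t → t < min T R → |x - x₀| < R - t →
      up t x = 0 ∧ um t x = 0 ∧ vp t x = 0 ∧ vm t x = 0 :=
  finite_speed_of_propagation_general T up um vp vm up0 um0 vp0 vm0 hbdd hequp hequm heqvp heqvm x₀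
    R hzero
end

section
/- Let T > 0 and let (u₊⁽¹⁾, u₋⁽¹⁾, v₊⁽¹⁾, v₋⁽¹⁾) and (u₊⁽²⁾, u₋⁽²⁾, v₊⁽²⁾, v₋⁽²⁾) be two families of bounded measurable functions [0,T] × ℝ → ℂ satisfying, for all (t,x) ∈ [0,T] × ℝ and for i = 1, 2: u±⁽ⁱ⁾(t,x) = u±₀⁽ⁱ⁾(x∓t) + ∫₀ᵗ (u±⁽ⁱ⁾v±⁽ⁱ⁾)(s, x∓(t−s)) ds and v±⁽ⁱ⁾(t,x) = v±₀⁽ⁱ⁾(x∓t) + ∫₀ᵗ (u±⁽ⁱ⁾v±⁽ⁱ⁾)(s, x∓(t−s)) ds, where the initial data are bounded measurable. If for some x₀ ∈ ℝ and R > 0 one has u±₀⁽¹⁾(x) = u±₀⁽²⁾(x) and v±₀⁽¹⁾(x) = v±₀⁽²⁾(x) for all |x − x₀| < R, then u±⁽¹⁾(t,x) = u±⁽²⁾(t,x) and v±⁽¹⁾(t,x) = v±⁽²⁾(t,x) for all 0 < t < min(T, R) and |x − x₀| < R − t. -/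
open MeasureTheory Set

/-- The family `(u₊,u₋,v₊,v₋)` satisfies the Duhamel integral equations of the
coupled system `∂ₜu± ± ∂ₓu± = u±v±`, `∂ₜv± ± ∂ₓv± = u±v±` on `[0,T]` with the
given initial data. -/
def SolvesQuadTransport (T : ℝ) (up um vp vm : ℝ → ℝ → ℂ)
    (up0 um0 vp0 vm0 : ℝ → ℂ) : Prop :=
  ∀ t ∈ Set.Icc (0:ℝ) T, ∀ x : ℝ,
    up t x = up0 (x - t) +
        (∫ s in (0:ℝ)..t, up s (x - (t - s)) * vp s (x - (t - s))) ∧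
    um t x = um0 (x + t) +
        (∫ s in (0:ℝ)..t, um s (x + (t - s)) * vm s (x + (t - s))) ∧
    vp t x = vp0 (x - t) +
        (∫ s in (0:ℝ)..t, up s (x - (t - s)) * vp s (x - (t - s))) ∧
    vm t x = vm0 (x + t) +
        (∫ s in (0:ℝ)..t, um s (x + (t - s)) * vm s (x + (t - s)))

/-- The family is bounded and measurable on `[0,T] × ℝ`, with bounded
measurable initial data. -/
def BddMeasFamily (T : ℝ) (up um vp vm : ℝ → ℝ → ℂ)
    (up0 um0 vp0 vm0 : ℝ → ℂ) : Prop :=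
  Measurable (Function.uncurry up) ∧ Measurable (Function.uncurry um) ∧
  Measurable (Function.uncurry vp) ∧ Measurable (Function.uncurry vm) ∧
  Measurable up0 ∧ Measurable um0 ∧ Measurable vp0 ∧ Measurable vm0 ∧
  (∃ C : ℝ, ∀ t ∈ Set.Icc (0:ℝ) T, ∀ x : ℝ,
    ‖up t x‖ ≤ C ∧ ‖um t x‖ ≤ C ∧ ‖vp t x‖ ≤ C ∧ ‖vm t x‖ ≤ C) ∧
  (∃ C : ℝ, ∀ x : ℝ, ‖up0 x‖ ≤ C ∧ ‖um0 x‖ ≤ C ∧ ‖vp0 x‖ ≤ C ∧ ‖vm0 x‖ ≤ C)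

/-!
The system splits into two independent pairs `(u₊, v₊)` and `(u₋, v₋)`, each solving a Duhamel
equation along characteristics of speed one. For two solutions whose data agree on the base of the
cone, `u₁ - u₂ = v₁ - v₂` inside the cone (both are the difference of the same Duhamel integrals),
so there `u₁v₁ - u₂v₂ = (u₁ + v₂)(u₁ - u₂)`. Characteristics through a point of the cone stay in
the cone, hence `‖u₁ - u₂‖ ≤ L ∫₀ᵗ ‖u₁ - u₂‖` along them, and iterating from the a priori bound
`L` gives `‖u₁ - u₂‖ ≤ L (L t)ⁿ / n!` for every `n`.
-/

open Filter Topology Function Nat intervalIntegral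

theorem abs_add_mul_sub_sub_lt {c x x₀ R s t : ℝ} (hc : |c| ≤ 1) (hst : s ≤ t)
    (hx : |x - x₀| < R - t) : |x + c * (t - s) - x₀| < R - s := by
  have hct : |c * (t - s)| ≤ t - s := by
    rw [abs_mul, abs_of_nonneg (sub_nonneg.2 hst)]
    exact mul_le_of_le_one_left (sub_nonneg.2 hst) hc
  calc |x + c * (t - s) - x₀| = |(x - x₀) + c * (t - s)| := by ring_nf
    _ ≤ |x - x₀| + |c * (t - s)| := abs_add_le _ _
    _ < R - s := by linarith

section General

variable {E : Type*} [NormedAddCommGroup E]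

theorem intervalIntegrable_comp_of_norm_le [MeasurableSpace E] [OpensMeasurableSpace E]
    [SecondCountableTopology E] {f : ℝ → ℝ → E} {γ : ℝ → ℝ} {T M t : ℝ}
    (hf : Measurable (uncurry f)) (hγ : Measurable γ)
    (hM : ∀ s ∈ Icc 0 T, ∀ y, ‖f s y‖ ≤ M) (ht : t ∈ Icc 0 T) :
    IntervalIntegrable (fun s => f s (γ s)) volume 0 t := by
  rw [intervalIntegrable_iff, uIoc_of_le ht.1]
  refine Measure.integrableOn_of_bounded (M := M) (by simp)
    (hf.comp (measurable_id.prodMk hγ)).aestronglyMeasurable ?_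
  filter_upwards [ae_restrict_mem measurableSet_Ioc] with s hs
  exact hM s ⟨hs.1.le, hs.2.trans ht.2⟩ _

theorem eq_zero_of_forall_norm_le_pow_div_factorial {z : E} {M r : ℝ}
    (h : ∀ n : ℕ, ‖z‖ ≤ M * r ^ n / n !) : z = 0 := by
  have hlim : Tendsto (fun n : ℕ => M * r ^ n / n !) atTop (𝓝 0) := by
    simpa [mul_div_assoc] using (FloorSemiring.tendsto_pow_div_factorial_atTop r).const_mul M
  exact norm_le_zero_iff.1 (ge_of_tendsto' hlim h)

variable [NormedSpace ℝ E]

theorem norm_integral_le_pow_div_factorial {F : ℝ → E} {t L M : ℝ} {n : ℕ} (ht : 0 ≤ t)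
    (hF : ∀ s ∈ Ioc 0 t, ‖F s‖ ≤ L * (M * (L * s) ^ n / n !)) :
    ‖∫ s in 0..t, F s‖ ≤ M * (L * t) ^ (n + 1) / (n + 1)! := by
  have hg : (fun s : ℝ => L * (M * (L * s) ^ n / n !)) =
      fun s => M * L ^ (n + 1) / n ! * s ^ n := by
    ext s; ring
  have hgi : IntervalIntegrable (fun s : ℝ => L * (M * (L * s) ^ n / n !)) volume 0 t := by
    rw [hg]; exact (by fun_prop : Continuous _).intervalIntegrable _ _
  calc ‖∫ s in 0..t, F s‖ ≤ ∫ s in 0..t, L * (M * (L * s) ^ n / n !) :=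
        norm_integral_le_of_norm_le ht (ae_of_all _ hF) hgi
    _ = M * (L * t) ^ (n + 1) / (n + 1)! := by
        rw [hg, intervalIntegral.integral_const_mul, integral_pow, factorial_succ, cast_mul,
          cast_succ]
        field_simp
        ring

end General

theorem intervalIntegrable_mul_comp_of_norm_le {A : Type*} [NormedRing A] [MeasurableSpace A]
    [BorelSpace A] [SecondCountableTopology A] {u v : ℝ → ℝ → A} {γ : ℝ → ℝ} {T C t : ℝ}
    (hu : Measurable (uncurry u)) (hv : Measurable (uncurry v)) (hγ : Measurable γ)
    (hC : ∀ s ∈ Icc 0 T, ∀ y, ‖u s y‖ ≤ C ∧ ‖v s y‖ ≤ C) (ht : t ∈ Icc 0 T) :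
    IntervalIntegrable (fun s => u s (γ s) * v s (γ s)) volume 0 t := by
  refine intervalIntegrable_comp_of_norm_le (f := fun s y => u s y * v s y) (M := C * C)
    (hu.mul hv) hγ (fun s hs y => ?_) ht
  obtain ⟨hus, hvs⟩ := hC s hs y
  exact (norm_mul_le _ _).trans (mul_le_mul hus hvs (norm_nonneg _) ((norm_nonneg _).trans hus))

/-- Duhamel form of `∂ₜu - c ∂ₓu = uv`, `∂ₜv - c ∂ₓv = uv`. -/
def SolvesDuhamelAlong (T c : ℝ) (u v : ℝ → ℝ → ℂ) (u₀ v₀ : ℝ → ℂ) : Prop :=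
  ∀ t ∈ Icc (0:ℝ) T, ∀ x : ℝ,
    u t x = u₀ (x + c * t) + (∫ s in 0..t, u s (x + c * (t - s)) * v s (x + c * (t - s))) ∧
    v t x = v₀ (x + c * t) + (∫ s in 0..t, u s (x + c * (t - s)) * v s (x + c * (t - s)))

theorem SolvesQuadTransport.solvesDuhamelAlong_plus {T : ℝ} {up um vp vm : ℝ → ℝ → ℂ}
    {up0 um0 vp0 vm0 : ℝ → ℂ} (h : SolvesQuadTransport T up um vp vm up0 um0 vp0 vm0) :
    SolvesDuhamelAlong T (-1) up vp up0 vp0 := by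
  intro t ht x
  simp only [neg_one_mul, ← sub_eq_add_neg]
  exact ⟨(h t ht x).1, (h t ht x).2.2.1⟩

theorem SolvesQuadTransport.solvesDuhamelAlong_minus {T : ℝ} {up um vp vm : ℝ → ℝ → ℂ}
    {up0 um0 vp0 vm0 : ℝ → ℂ} (h : SolvesQuadTransport T up um vp vm up0 um0 vp0 vm0) :
    SolvesDuhamelAlong T 1 um vm um0 vm0 := by
  intro t ht x
  simp only [one_mul]
  exact ⟨(h t ht x).2.1, (h t ht x).2.2.2⟩

namespace SolvesDuhamelAlong

variable {T c C₁ C₂ x₀ R t x : ℝ} {u₁ v₁ u₂ v₂ : ℝ → ℝ → ℂ} {u₀₁ v₀₁ u₀₂ v₀₂ : ℝ → ℂ}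

theorem sub_eq_sub (h₁ : SolvesDuhamelAlong T c u₁ v₁ u₀₁ v₀₁)
    (h₂ : SolvesDuhamelAlong T c u₂ v₂ u₀₂ v₀₂) (ht : t ∈ Icc 0 T)
    (hu₀ : u₀₁ (x + c * t) = u₀₂ (x + c * t)) (hv₀ : v₀₁ (x + c * t) = v₀₂ (x + c * t)) :
    v₁ t x - v₂ t x = u₁ t x - u₂ t x := by
  rw [(h₁ t ht x).1, (h₁ t ht x).2, (h₂ t ht x).1, (h₂ t ht x).2, hu₀, hv₀]
  ring

theorem sub_eq_integral_sub (h₁ : SolvesDuhamelAlong T c u₁ v₁ u₀₁ v₀₁)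
    (h₂ : SolvesDuhamelAlong T c u₂ v₂ u₀₂ v₀₂) (ht : t ∈ Icc 0 T)
    (hu₀ : u₀₁ (x + c * t) = u₀₂ (x + c * t))
    (hi₁ : IntervalIntegrable (fun s => u₁ s (x + c * (t - s)) * v₁ s (x + c * (t - s)))
      volume 0 t)
    (hi₂ : IntervalIntegrable (fun s => u₂ s (x + c * (t - s)) * v₂ s (x + c * (t - s)))
      volume 0 t) :
    u₁ t x - u₂ t x = ∫ s in 0..t, (u₁ s (x + c * (t - s)) * v₁ s (x + c * (t - s)) -
      u₂ s (x + c * (t - s)) * v₂ s (x + c * (t - s))) := by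
  rw [(h₁ t ht x).1, (h₂ t ht x).1, hu₀, integral_sub hi₁ hi₂]
  ring

variable (h₁ : SolvesDuhamelAlong T c u₁ v₁ u₀₁ v₀₁) (h₂ : SolvesDuhamelAlong T c u₂ v₂ u₀₂ v₀₂)
  (hc : |c| ≤ 1)
  (hmu₁ : Measurable (uncurry u₁)) (hmv₁ : Measurable (uncurry v₁))
  (hmu₂ : Measurable (uncurry u₂)) (hmv₂ : Measurable (uncurry v₂))
  (hC₁ : ∀ t ∈ Icc 0 T, ∀ x, ‖u₁ t x‖ ≤ C₁ ∧ ‖v₁ t x‖ ≤ C₁)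
  (hC₂ : ∀ t ∈ Icc 0 T, ∀ x, ‖u₂ t x‖ ≤ C₂ ∧ ‖v₂ t x‖ ≤ C₂)
  (hdata : ∀ x, |x - x₀| < R → u₀₁ x = u₀₂ x ∧ v₀₁ x = v₀₂ x)
include h₁ h₂ hc hmu₁ hmv₁ hmu₂ hmv₂ hC₁ hC₂ hdata

theorem norm_sub_le_pow_div_factorial (n : ℕ) :
    ∀ t x, 0 ≤ t → t < min T R → |x - x₀| < R - t →
      ‖u₁ t x - u₂ t x‖ ≤ (C₁ + C₂) * ((C₁ + C₂) * t) ^ n / n ! := by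
  induction n with
  | zero =>
    intro t x ht htm _
    have htT : t ∈ Icc 0 T := ⟨ht, (lt_min_iff.1 htm).1.le⟩
    simpa using (norm_sub_le _ _).trans (add_le_add (hC₁ t htT x).1 (hC₂ t htT x).1)
  | succ n ih =>
    intro t x ht htm hx
    have htT : t ∈ Icc 0 T := ⟨ht, (lt_min_iff.1 htm).1.le⟩
    have hmeas : Measurable fun s : ℝ => x + c * (t - s) := by fun_prop
    have hdiff := h₁.sub_eq_integral_sub h₂ htT
      (hdata _ (by simpa using abs_add_mul_sub_sub_lt hc ht hx)).1
      (intervalIntegrable_mul_comp_of_norm_le hmu₁ hmv₁ hmeas hC₁ htT)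
      (intervalIntegrable_mul_comp_of_norm_le hmu₂ hmv₂ hmeas hC₂ htT)
    rw [hdiff]
    refine norm_integral_le_pow_div_factorial ht fun s hs => ?_
    set y := x + c * (t - s)
    have hsT : s ∈ Icc 0 T := ⟨hs.1.le, hs.2.trans htT.2⟩
    have hy : |y - x₀| < R - s := abs_add_mul_sub_sub_lt hc hs.2 hx
    have hy₀ := hdata _ (by simpa using abs_add_mul_sub_sub_lt hc hs.1.le hy)
    have hv := h₁.sub_eq_sub h₂ hsT hy₀.1 hy₀.2
    have hfactor : u₁ s y * v₁ s y - u₂ s y * v₂ s y = (u₁ s y + v₂ s y) * (u₁ s y - u₂ s y) := by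
      linear_combination u₁ s y * hv
    have hsum : ‖u₁ s y + v₂ s y‖ ≤ C₁ + C₂ :=
      (norm_add_le _ _).trans (add_le_add (hC₁ s hsT y).1 (hC₂ s hsT y).2)
    rw [hfactor, norm_mul]
    exact mul_le_mul hsum (ih s y hs.1.le (hs.2.trans_lt htm) hy) (norm_nonneg _)
      ((norm_nonneg _).trans hsum)

theorem eq_in_lightCone (ht : 0 ≤ t) (htm : t < min T R) (hx : |x - x₀| < R - t) :
    u₁ t x = u₂ t x ∧ v₁ t x = v₂ t x := by
  have hu : u₁ t x = u₂ t x := sub_eq_zero.1 <| eq_zero_of_forall_norm_le_pow_div_factorial fun n =>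
    h₁.norm_sub_le_pow_div_factorial h₂ hc hmu₁ hmv₁ hmu₂ hmv₂ hC₁ hC₂ hdata n t x ht htm hx
  have hx₀ := hdata _ (by simpa using abs_add_mul_sub_sub_lt hc ht hx)
  have hv := h₁.sub_eq_sub h₂ ⟨ht, (lt_min_iff.1 htm).1.le⟩ hx₀.1 hx₀.2
  exact ⟨hu, sub_eq_zero.1 (hv.trans (sub_eq_zero.2 hu))⟩

end SolvesDuhamelAlong

theorem local_uniqueness_light_cone_general
    (T : ℝ)
    (up1 um1 vp1 vm1 up2 um2 vp2 vm2 : ℝ → ℝ → ℂ)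
    (up01 um01 vp01 vm01 up02 um02 vp02 vm02 : ℝ → ℂ)
    (hbm1 : BddMeasFamily T up1 um1 vp1 vm1 up01 um01 vp01 vm01)
    (hbm2 : BddMeasFamily T up2 um2 vp2 vm2 up02 um02 vp02 vm02)
    (heq1 : SolvesQuadTransport T up1 um1 vp1 vm1 up01 um01 vp01 vm01)
    (heq2 : SolvesQuadTransport T up2 um2 vp2 vm2 up02 um02 vp02 vm02)
    (x₀ R : ℝ)
    (hdata : ∀ x : ℝ, |x - x₀| < R →
      up01 x = up02 x ∧ um01 x = um02 x ∧ vp01 x = vp02 x ∧ vm01 x = vm02 x) :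
    ∀ t x : ℝ, 0 < t → t < min T R → |x - x₀| < R - t →
      up1 t x = up2 t x ∧ um1 t x = um2 t x ∧
      vp1 t x = vp2 t x ∧ vm1 t x = vm2 t x := by
  obtain ⟨hup1, hum1, hvp1, hvm1, -, -, -, -, ⟨C₁, hC₁⟩, -⟩ := hbm1
  obtain ⟨hup2, hum2, hvp2, hvm2, -, -, -, -, ⟨C₂, hC₂⟩, -⟩ := hbm2
  intro t x ht htm hx
  obtain ⟨hup, hvp⟩ := heq1.solvesDuhamelAlong_plus.eq_in_lightCone
    heq2.solvesDuhamelAlong_plus (by norm_num) hup1 hvp1 hup2 hvp2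
    (fun s hs y => ⟨(hC₁ s hs y).1, (hC₁ s hs y).2.2.1⟩)
    (fun s hs y => ⟨(hC₂ s hs y).1, (hC₂ s hs y).2.2.1⟩)
    (fun y hy => ⟨(hdata y hy).1, (hdata y hy).2.2.1⟩) ht.le htm hx
  obtain ⟨hum, hvm⟩ := heq1.solvesDuhamelAlong_minus.eq_in_lightCone
    heq2.solvesDuhamelAlong_minus (by norm_num) hum1 hvm1 hum2 hvm2
    (fun s hs y => ⟨(hC₁ s hs y).2.1, (hC₁ s hs y).2.2.2⟩)
    (fun s hs y => ⟨(hC₂ s hs y).2.1, (hC₂ s hs y).2.2.2⟩)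
    (fun y hy => ⟨(hdata y hy).2.1, (hdata y hy).2.2.2⟩) ht.le htm hx
  exact ⟨hup, hum, hvp, hvm⟩

/-- Local uniqueness inside the backward light cone for the coupled system of
transport equations `∂ₜu± ± ∂ₓu± = u±v±`, `∂ₜv± ± ∂ₓv± = u±v±`: two bounded
measurable solutions whose initial data agree on `{|x−x₀| < R}` agree on
`{|x−x₀| < R−t}`. -/
theorem local_uniqueness_light_cone
    (T : ℝ) (hT : 0 < T)
    (up1 um1 vp1 vm1 up2 um2 vp2 vm2 : ℝ → ℝ → ℂ)
    (up01 um01 vp01 vm01 up02 um02 vp02 vm02 : ℝ → ℂ)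
    (hbm1 : BddMeasFamily T up1 um1 vp1 vm1 up01 um01 vp01 vm01)
    (hbm2 : BddMeasFamily T up2 um2 vp2 vm2 up02 um02 vp02 vm02)
    (heq1 : SolvesQuadTransport T up1 um1 vp1 vm1 up01 um01 vp01 vm01)
    (heq2 : SolvesQuadTransport T up2 um2 vp2 vm2 up02 um02 vp02 vm02)
    (x₀ R : ℝ) (hR : 0 < R)
    (hdata : ∀ x : ℝ, |x - x₀| < R →
      up01 x = up02 x ∧ um01 x = um02 x ∧ vp01 x = vp02 x ∧ vm01 x = vm02 x) :
    ∀ t x : ℝ, 0 < t → t < min T R → |x - x₀| < R - t →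
      up1 t x = up2 t x ∧ um1 t x = um2 t x ∧
      vp1 t x = vp2 t x ∧ vm1 t x = vm2 t x :=
  local_uniqueness_light_cone_general T up1 um1 vp1 vm1 up2 um2 vp2 vm2 up01 um01 vp01 vm01 up02
    um02 vp02 vm02 hbm1 hbm2 heq1 heq2 x₀ R hdata
end

section
/- Let m > 0, let A : ℝ × ℝ → ℝ be continuous, let φ : [0,∞) × ℝ → ℂ be continuous, and let ψ : [0,∞) × ℝ → ℂ be continuously differentiable, satisfy ψ(0,x) = 0 for all x, and solve ∂ₜψ(t,x) + ∂ₓψ(t,x) = i A(t,x) ψ(t,x) − i m φ(t,x) for all t ≥ 0, x ∈ ℝ. Then for all t ≥ 0 and x ∈ ℝ, |ψ(t,x)| ≤ m ∫₀ᵗ |φ(s, x − t + s)| ds. -/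
/-!
Along the characteristic `s ↦ (s, x - t + s)` the function `g s = ψ (s, x - t + s)` solves the
ODE `g' = i A g - i m φ`. Since `A` is real, `i A g` is orthogonal to `g` and does not change `‖g‖`,
so `⟪g, g'⟫ ≤ ‖g‖ · m ‖φ‖`, i.e. `‖g‖` grows at rate at most `m ‖φ‖`; integrating from `g 0 = 0`
gives the bound.
-/

open Set Complex
open scoped RealInnerProductSpace

theorem norm_le_norm_add_integral_of_inner_deriv_le {E : Type*} [NormedAddCommGroup E]
    [InnerProductSpace ℝ E] {f f' : ℝ → E} {k : ℝ → ℝ} {a b : ℝ} (hab : a ≤ b)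
    (hf : ContinuousOn f (Icc a b)) (hf' : ∀ s ∈ Ico a b, HasDerivWithinAt f (f' s) (Ici s) s)
    (hk : Continuous k) (hk_nonneg : ∀ s ∈ Ico a b, 0 ≤ k s)
    (hinner : ∀ s ∈ Ico a b, ⟪f s, f' s⟫ ≤ ‖f s‖ * k s) :
    ‖f b‖ ≤ ‖f a‖ + ∫ s in a..b, k s := by
  refine le_of_forall_pos_le_add fun ε hε => ?_
  -- `√(‖f‖² + ε²)` is a smooth stand-in for `‖f‖`, which need not be differentiable where `f = 0`.
  set u : ℝ → ℝ := fun s => √(‖f s‖ ^ 2 + ε ^ 2)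
  have hu_pos : ∀ s, 0 < u s := fun s => Real.sqrt_pos.2 (by positivity)
  have hnorm_le_u : ∀ s, ‖f s‖ ≤ u s := fun s =>
    Real.le_sqrt_of_sq_le (le_add_of_nonneg_right (sq_nonneg ε))
  have hu_deriv : ∀ s ∈ Ico a b,
      HasDerivWithinAt u (2 * ⟪f s, f' s⟫ / (2 * u s)) (Ici s) s := fun s hs =>
    (((hf' s hs).norm_sq).add_const _).sqrt (by positivity)
  have hu_deriv_le : ∀ s ∈ Ico a b, 2 * ⟪f s, f' s⟫ / (2 * u s) ≤ k s := by
    intro s hs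
    rw [mul_div_mul_left _ _ two_ne_zero, div_le_iff₀' (hu_pos s)]
    calc ⟪f s, f' s⟫ ≤ ‖f s‖ * k s := hinner s hs
      _ ≤ u s * k s := mul_le_mul_of_nonneg_right (hnorm_le_u s) (hk_nonneg s hs)
  have hprim : ∀ s, HasDerivAt (fun r => ∫ q in a..r, k q) (k s) s := fun s =>
    (hk.integral_hasStrictDerivAt a s).hasDerivAt
  have hu_le : u b ≤ u a + ∫ s in a..b, k s :=
    image_le_of_deriv_right_le_deriv_boundary
      (by fun_prop) hu_deriv (by simp)
      (fun s _ => ((hprim s).const_add (u a)).continuousAt.continuousWithinAt)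
      (fun s _ => ((hprim s).const_add (u a)).hasDerivWithinAt) hu_deriv_le ⟨hab, le_rfl⟩
  have hu_a : u a ≤ ‖f a‖ + ε :=
    Real.sqrt_le_iff.2 ⟨by positivity, by nlinarith [norm_nonneg (f a)]⟩
  linarith [hnorm_le_u b]

theorem hasDerivAt_comp_characteristic {E : Type*} [NormedAddCommGroup E] [NormedSpace ℝ E]
    {ψ : ℝ × ℝ → E} {c s : ℝ} (hψ : DifferentiableAt ℝ ψ (s, c + s)) :
    HasDerivAt (fun τ => ψ (τ, c + τ))
      (deriv (fun τ => ψ (τ, c + s)) s + deriv (fun y => ψ (s, y)) (c + s)) s := by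
  have hψ' := hψ.hasFDerivAt
  have ht : HasDerivAt (fun τ => ψ (τ, c + s)) (fderiv ℝ ψ (s, c + s) (1, 0)) s :=
    hψ'.comp_hasDerivAt s ((hasDerivAt_id s).prodMk (hasDerivAt_const s _))
  have hx : HasDerivAt (fun y => ψ (s, y)) (fderiv ℝ ψ (s, c + s) (0, 1)) (c + s) :=
    hψ'.comp_hasDerivAt (c + s) ((hasDerivAt_const _ s).prodMk (hasDerivAt_id _))
  rw [ht.deriv, hx.deriv, ← map_add, Prod.mk_add_mk, add_zero, zero_add]
  exact hψ'.comp_hasDerivAt s ((hasDerivAt_id s).prodMk ((hasDerivAt_id s).const_add c))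

theorem Complex.real_inner_I_mul_ofReal_mul_self (a : ℝ) (z : ℂ) : ⟪z, I * a * z⟫ = 0 := by
  rw [Complex.inner, mul_assoc, mul_assoc, mul_conj, ← ofReal_mul]
  simp

theorem intrinsic_pointwise_bound_general
    (m : ℝ) (hm : 0 < m)
    (A : ℝ × ℝ → ℝ)
    (φ : ℝ × ℝ → ℂ) (hφ : Continuous φ)
    (ψ : ℝ × ℝ → ℂ) (hψ : ContDiff ℝ 1 ψ)
    (hψ0 : ∀ x : ℝ, ψ (0, x) = 0)
    (hpde : ∀ t x : ℝ, 0 ≤ t →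
      deriv (fun τ : ℝ => ψ (τ, x)) t + deriv (fun y : ℝ => ψ (t, y)) x
        = Complex.I * (A (t, x) : ℂ) * ψ (t, x) - Complex.I * (m : ℂ) * φ (t, x)) :
    ∀ t x : ℝ, 0 ≤ t →
      ‖ψ (t, x)‖ ≤ m * (∫ s in (0:ℝ)..t, ‖φ (s, x - t + s)‖) := by
  intro t x ht
  have hchar : ∀ s, 0 ≤ s → HasDerivAt (fun τ => ψ (τ, x - t + τ))
      (I * A (s, x - t + s) * ψ (s, x - t + s) - I * m * φ (s, x - t + s)) s := fun s hs => by
    simpa only [hpde s _ hs] using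
      hasDerivAt_comp_characteristic ((hψ.differentiable one_ne_zero) (s, x - t + s))
  have hinner : ∀ s, ⟪ψ (s, x - t + s), I * A (s, x - t + s) * ψ (s, x - t + s)
      - I * m * φ (s, x - t + s)⟫ ≤ ‖ψ (s, x - t + s)‖ * (m * ‖φ (s, x - t + s)‖) := fun s => by
    rw [inner_sub_right, Complex.real_inner_I_mul_ofReal_mul_self, zero_sub, ← inner_neg_right]
    refine (real_inner_le_norm _ _).trans_eq ?_
    simp [abs_of_pos hm]
  have key := norm_le_norm_add_integral_of_inner_deriv_le ht
    ((hψ.continuous.comp (by fun_prop)).continuousOn)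
    (fun s hs => (hchar s hs.1).hasDerivWithinAt) (by fun_prop)
    (fun s _ => by positivity) (fun s _ => hinner s)
  simpa [hψ0, intervalIntegral.integral_const_mul] using key

/-- Pointwise bound for the mass-coupled component of the Dirac part: if
`∂ₜψ + ∂ₓψ = iAψ − imφ` with real-valued `A` and `ψ(0,·) = 0`, then
`|ψ(t,x)| ≤ m ∫₀ᵗ |φ(s, x−t+s)| ds` for all `t ≥ 0`. -/
theorem intrinsic_pointwise_bound
    (m : ℝ) (hm : 0 < m)
    (A : ℝ × ℝ → ℝ) (hA : Continuous A)
    (φ : ℝ × ℝ → ℂ) (hφ : Continuous φ)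
    (ψ : ℝ × ℝ → ℂ) (hψ : ContDiff ℝ 1 ψ)
    (hψ0 : ∀ x : ℝ, ψ (0, x) = 0)
    (hpde : ∀ t x : ℝ, 0 ≤ t →
      deriv (fun τ : ℝ => ψ (τ, x)) t + deriv (fun y : ℝ => ψ (t, y)) x
        = Complex.I * (A (t, x) : ℂ) * ψ (t, x) - Complex.I * (m : ℂ) * φ (t, x)) :
    ∀ t x : ℝ, 0 ≤ t →
      ‖ψ (t, x)‖ ≤ m * (∫ s in (0:ℝ)..t, ‖φ (s, x - t + s)‖) :=
  intrinsic_pointwise_bound_general m hm A φ hφ ψ hψ hψ0 hpde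
end
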